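/- arXiv:1511.05631 — 4 statements merged into one kernel-verified Lean document; each statement's English description precedes it below -/
import Mathlib

section
/- Let E be a sublinear expectation on the space X of bounded measurable real-valued functions on (Ω, F). For every ξ ∈ X, the set { L(ξ) : L is a linear functional on X dominated by E } equals the closed interval [−E(−ξ), E(ξ)]. -/
open MeasureTheory Set Filter Topology Classical

/-- The space of bounded measurable real-valued functions on `Ω`, as a submodule of `Ω → ℝ`. -/
def BM (Ω : Type*) [MeasurableSpace Ω] : Submodule ℝ (Ω → ℝ) where
  carrier := {f | Measurable f ∧ ∃ M : ℝ, ∀ ω, |f ω| ≤ M}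
  zero_mem' := ⟨measurable_const, 0, by simp⟩
  add_mem' := by
    rintro f g ⟨hf, Mf, hMf⟩ ⟨hg, Mg, hMg⟩
    exact ⟨hf.add hg, Mf + Mg, fun ω => (abs_add_le _ _).trans (add_le_add (hMf ω) (hMg ω))⟩
  smul_mem' := by
    rintro c f ⟨hf, Mf, hMf⟩
    refine ⟨hf.const_smul c, |c| * Mf, fun ω => ?_⟩
    simp only [Pi.smul_apply, smul_eq_mul, abs_mul]
    exact mul_le_mul_of_nonneg_left (hMf ω) (abs_nonneg c)

variable {Ω : Type*} [MeasurableSpace Ω]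

lemma mem_BM {f : Ω → ℝ} (hf : Measurable f) (M : ℝ) (hM : ∀ ω, |f ω| ≤ M) : f ∈ BM Ω :=
  ⟨hf, M, hM⟩

lemma BM.measurable (ξ : BM Ω) : Measurable (ξ : Ω → ℝ) := ξ.2.1

lemma BM.bounded (ξ : BM Ω) : ∃ M : ℝ, ∀ ω, |(ξ : Ω → ℝ) ω| ≤ M := ξ.2.2

/-- A sublinear expectation on the space of bounded measurable functions. -/
structure SLE (Ω : Type*) [MeasurableSpace Ω] where
  E : BM Ω → ℝ
  mono : ∀ ξ η : BM Ω, (∀ ω, (η : Ω → ℝ) ω ≤ (ξ : Ω → ℝ) ω) → E η ≤ E ξ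
  const_preserve : ∀ (c : ℝ) (h : (fun _ : Ω => c) ∈ BM Ω), E ⟨fun _ => c, h⟩ = c
  subadd : ∀ ξ η : BM Ω, E (ξ + η) ≤ E ξ + E η
  pos_homog : ∀ (c : ℝ), 0 ≤ c → ∀ ξ : BM Ω, E (c • ξ) = c * E ξ

/-- The constant function as an element of `BM Ω`. -/
def constBM (Ω : Type*) [MeasurableSpace Ω] (c : ℝ) : BM Ω :=
  ⟨fun _ => c, mem_BM measurable_const |c| fun _ => le_refl _⟩

/-- The indicator function of a measurable set as an element of `BM Ω`. -/
noncomputable def indBM {Ω : Type*} [MeasurableSpace Ω] (A : Set Ω) (hA : MeasurableSet A) : BM Ω :=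
  ⟨A.indicator fun _ => 1,
    mem_BM (measurable_const.indicator hA) 1 fun ω => by
      by_cases h : ω ∈ A <;> simp [Set.indicator_apply, h]⟩

/-- The product of two bounded measurable functions. -/
noncomputable def mulBM (ξ η : BM Ω) : BM Ω := by
  refine ⟨fun ω => (ξ : Ω → ℝ) ω * (η : Ω → ℝ) ω, ?_⟩
  obtain ⟨Mf, hMf⟩ := BM.bounded ξ
  obtain ⟨Mg, hMg⟩ := BM.bounded η
  refine mem_BM ((BM.measurable ξ).mul (BM.measurable η)) (max Mf 0 * max Mg 0) fun ω => ?_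
  rw [abs_mul]
  exact mul_le_mul ((hMf ω).trans (le_max_left _ _)) ((hMg ω).trans (le_max_left _ _))
    (abs_nonneg _) (le_max_right _ _)

/-- The upper capacity associated to a sublinear expectation: `C(A) = E(1_A)` for measurable `A`
(junk value `0` on non-measurable sets). -/
noncomputable def SLE.cap (𝔼 : SLE Ω) (A : Set Ω) : ℝ :=
  if h : MeasurableSet A then 𝔼.E (indBM A h) else 0

/-- The lower capacity associated to a sublinear expectation: `c(A) = -E(-1_A)` for measurable `A`
(junk value `0` on non-measurable sets). -/
noncomputable def SLE.lcap (𝔼 : SLE Ω) (A : Set Ω) : ℝ :=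
  if h : MeasurableSet A then -𝔼.E (-(indBM A h)) else 0

/-- A linear expectation dominated by the sublinear expectation `𝔼`. -/
def Dominated (𝔼 : SLE Ω) (L : BM Ω →ₗ[ℝ] ℝ) : Prop := ∀ ξ : BM Ω, L ξ ≤ 𝔼.E ξ

/-- `ξ` and `η` are uncorrelated with respect to `𝔼` if `L(ξη) = L(ξ)L(η)` for every
linear expectation `L` dominated by `𝔼`. -/
def Uncorrelated (𝔼 : SLE Ω) (ξ η : BM Ω) : Prop :=
  ∀ L : BM Ω →ₗ[ℝ] ℝ, Dominated 𝔼 L → L (mulBM ξ η) = L ξ * L η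

/-- `𝔼` is regular: if `ξ n ↓ 0` pointwise then `𝔼.E (ξ n) ↓ 0`. -/
def SLE.Regular (𝔼 : SLE Ω) : Prop :=
  ∀ ξ : ℕ → BM Ω, (∀ ω, Antitone fun n => (ξ n : Ω → ℝ) ω) →
    (∀ ω, Tendsto (fun n => (ξ n : Ω → ℝ) ω) atTop (𝓝 0)) →
    Tendsto (fun n => 𝔼.E (ξ n)) atTop (𝓝 0)

/-- The σ-field generated by `ξ a, …, ξ b`. -/
def sigmaGen (ξ : ℕ → BM Ω) (a b : ℕ) : MeasurableSpace Ω :=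
  ⨆ i ∈ Set.Icc a b, MeasurableSpace.comap (fun ω => (ξ i : Ω → ℝ) ω) inferInstance

/-- `{ξ_n}_{n ≥ 1}` is an independent sequence under `𝔼`: pairwise uncorrelated, and
`C(A ∩ B) ≤ C(A) C(B)` whenever `A ∈ σ(ξ_1, …, ξ_m)` and `B ∈ σ(ξ_{m+1}, …, ξ_n)`, `m < n`. -/
def IndepSeq (𝔼 : SLE Ω) (ξ : ℕ → BM Ω) : Prop :=
  (∀ i j, 1 ≤ i → 1 ≤ j → i ≠ j → Uncorrelated 𝔼 (ξ i) (ξ j)) ∧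
  ∀ m n : ℕ, 1 ≤ m → m < n → ∀ A B : Set Ω,
    MeasurableSet[sigmaGen ξ 1 m] A → MeasurableSet[sigmaGen ξ (m + 1) n] B →
    𝔼.cap (A ∩ B) ≤ 𝔼.cap A * 𝔼.cap B

/-- Assumption (H₀): for every disjoint measurable cover `{A_n}` of `Ω`,
the series `Σ C(A_n)` has bounded partial sums. -/
def H0 (𝔼 : SLE Ω) : Prop :=
  ∀ A : ℕ → Set Ω, (∀ n, MeasurableSet (A n)) → Pairwise (Function.onFun Disjoint A) →
    (⋃ n, A n) = Set.univ → ∃ M : ℝ, ∀ N : ℕ, ∑ n ∈ Finset.range N, 𝔼.cap (A n) < M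


/-! The bounds come from dominance at `ξ` and at `-ξ`. Conversely, for `t` in the interval the
functional `c • ξ ↦ c * t` on the line through `ξ` is dominated by `𝔼`, and the Hahn–Banach
theorem extends it to a dominated linear functional on all of `X`. -/

section Sublinear

variable {E : Type*} [AddCommGroup E] [Module ℝ E] {N : E → ℝ}

lemma map_zero_of_posHomog (N_hom : ∀ c : ℝ, 0 < c → ∀ x, N (c • x) = c * N x) : N 0 = 0 := by
  have h := N_hom 2 two_pos 0
  rw [smul_zero] at h
  linarith

lemma neg_apply_neg_le_of_le {L : E →ₗ[ℝ] ℝ} (hL : ∀ x, L x ≤ N x) (ξ : E) : -N (-ξ) ≤ L ξ := by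
  have h := hL (-ξ)
  rw [map_neg] at h
  linarith

lemma mul_le_apply_smul_of_mem_Icc (N_hom : ∀ c : ℝ, 0 < c → ∀ x, N (c • x) = c * N x)
    {ξ : E} {t : ℝ} (ht : t ∈ Icc (-N (-ξ)) (N ξ)) (c : ℝ) : c * t ≤ N (c • ξ) := by
  rcases lt_trichotomy c 0 with hc | rfl | hc
  · calc c * t = -c * -t := (neg_mul_neg c t).symm
      _ ≤ -c * N (-ξ) := mul_le_mul_of_nonneg_left (by linarith [ht.1]) (neg_nonneg.2 hc.le)
      _ = N (c • ξ) := by rw [← N_hom (-c) (neg_pos.2 hc), neg_smul_neg]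
  · rw [zero_mul, zero_smul, map_zero_of_posHomog N_hom]
  · rw [N_hom c hc]
    exact mul_le_mul_of_nonneg_left ht.2 hc.le

theorem exists_linearMap_le_apply_eq (N_hom : ∀ c : ℝ, 0 < c → ∀ x, N (c • x) = c * N x)
    (N_add : ∀ x y, N (x + y) ≤ N x + N y) {ξ : E} {t : ℝ} (ht : t ∈ Icc (-N (-ξ)) (N ξ)) :
    ∃ L : E →ₗ[ℝ] ℝ, (∀ x, L x ≤ N x) ∧ L ξ = t := by
  have h_span : ∀ c : ℝ, c • ξ = 0 → c • t = 0 := by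
    intro c hc
    rcases smul_eq_zero.1 hc with rfl | rfl
    · exact zero_smul ℝ t
    · have ht0 : t = 0 := by
        simpa [map_zero_of_posHomog N_hom, le_antisymm_iff, and_comm] using ht
      rw [ht0, smul_zero]
  set f := LinearPMap.mkSpanSingleton' (σ := RingHom.id ℝ) ξ t h_span
  have hf : ∀ y : f.domain, f y ≤ N y := by
    rintro ⟨y, hy⟩
    obtain ⟨c, rfl⟩ := Submodule.mem_span_singleton.1 hy
    rw [LinearPMap.mkSpanSingleton'_apply]
    exact mul_le_apply_smul_of_mem_Icc N_hom ht c
  obtain ⟨L, hLf, hLN⟩ := exists_extension_of_le_sublinear f N N_hom N_add hf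
  have hξ : ξ ∈ f.domain := Submodule.mem_span_singleton_self ξ
  exact ⟨L, hLN, (hLf ⟨ξ, hξ⟩).trans (LinearPMap.mkSpanSingleton'_apply_self _ _ _ _)⟩

theorem setOf_linearMap_le_apply_eq_Icc (N_hom : ∀ c : ℝ, 0 < c → ∀ x, N (c • x) = c * N x)
    (N_add : ∀ x y, N (x + y) ≤ N x + N y) (ξ : E) :
    {t : ℝ | ∃ L : E →ₗ[ℝ] ℝ, (∀ x, L x ≤ N x) ∧ L ξ = t} = Icc (-N (-ξ)) (N ξ) := by
  ext t
  constructor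
  · rintro ⟨L, hL, rfl⟩
    exact ⟨neg_apply_neg_le_of_le hL ξ, hL ξ⟩
  · exact exists_linearMap_le_apply_eq N_hom N_add

end Sublinear

/-- The set of values `L ξ`, over linear expectations `L` dominated by `𝔼`,
is exactly the closed interval `[-𝔼.E (-ξ), 𝔼.E ξ]`. -/
theorem dominated_values_eq_Icc (𝔼 : SLE Ω) (ξ : BM Ω) :
    {x : ℝ | ∃ L : BM Ω →ₗ[ℝ] ℝ, Dominated 𝔼 L ∧ L ξ = x} =
      Set.Icc (-𝔼.E (-ξ)) (𝔼.E ξ) :=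
  setOf_linearMap_le_apply_eq_Icc (fun c hc => 𝔼.pos_homog c hc.le) 𝔼.subadd ξ
end

section
/- Let E be a sublinear expectation on the space X of bounded measurable real-valued functions on (Ω, F). If ξ, η ∈ X are uncorrelated with respect to E, then there exists a constant λ̂ ∈ [−E(−ξ), E(ξ)] such that E((ξ − λ̂)η) = 0. -/
open MeasureTheory Set Filter Topology Classical

variable {Ω : Type*} [MeasurableSpace Ω]

/-! Every linear expectation `L` dominated by `𝔼` is multiplicative on `ξη`, so
`L((ξ - λ)η) = (Lξ - λ) Lη`, and by Hahn–Banach `𝔼` is the maximum of these functionals.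
Uncorrelatedness at `L`, `L'` and their midpoint gives `(Lξ - L'ξ)(Lη - L'η) = 0`. Hence if some
dominated `L₀` has `L₀ξ = λ`, then `(Lξ - λ) Lη = (Lξ - λ) L₀η` for every dominated `L`, and
`𝔼((ξ - λ)η) = 0` as soon as this is `≤ 0`. This holds for `λ = 𝔼ξ` if a maximiser `L₀` of `ξ` has
`L₀η ≥ 0`, and for `λ = -𝔼(-ξ)` if a minimiser has `L₀η ≤ 0`; in the remaining case the two differ
on `η`, so the identity above makes the minimiser a maximiser as well. -/

namespace SLE

variable (𝔼 : SLE Ω)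

lemma E_zero : 𝔼.E 0 = 0 := by
  simpa using 𝔼.pos_homog 0 le_rfl 0

lemma neg_E_le_E_neg (x : BM Ω) : -𝔼.E x ≤ 𝔼.E (-x) := by
  have := 𝔼.subadd x (-x)
  rw [add_neg_cancel, 𝔼.E_zero] at this
  linarith

lemma mul_E_le_E_smul (c : ℝ) (x : BM Ω) : c * 𝔼.E x ≤ 𝔼.E (c • x) := by
  rcases le_total 0 c with hc | hc
  · rw [𝔼.pos_homog c hc]
  · rw [← neg_smul_neg c x, 𝔼.pos_homog (-c) (neg_nonneg.mpr hc)]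
    nlinarith [𝔼.neg_E_le_E_neg x]

theorem exists_dominated_eq (x : BM Ω) : ∃ L : BM Ω →ₗ[ℝ] ℝ, Dominated 𝔼 L ∧ L x = 𝔼.E x := by
  have hx : ∀ c : ℝ, c • x = 0 → c • 𝔼.E x = 0 := by
    intro c hc
    rcases smul_eq_zero.mp hc with rfl | rfl
    · exact zero_smul _ _
    · rw [𝔼.E_zero, smul_zero]
  obtain ⟨L, hLx, hdom⟩ := exists_extension_of_le_sublinear
    (LinearPMap.mkSpanSingleton' x (𝔼.E x) hx) 𝔼.E (fun c hc => 𝔼.pos_homog c hc.le) 𝔼.subadd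
    (by
      rintro ⟨_, hy⟩
      obtain ⟨c, rfl⟩ := Submodule.mem_span_singleton.mp hy
      rw [LinearPMap.mkSpanSingleton'_apply]
      exact 𝔼.mul_E_le_E_smul c x)
  exact ⟨L, hdom, (hLx ⟨x, Submodule.mem_span_singleton_self x⟩).trans (LinearPMap.mkSpanSingleton'_apply_self _ _ _ _)⟩

end SLE

namespace Dominated

variable {𝔼 : SLE Ω} {L L' : BM Ω →ₗ[ℝ] ℝ}

lemma neg_E_neg_le (hL : Dominated 𝔼 L) (x : BM Ω) : -𝔼.E (-x) ≤ L x := by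
  have := hL (-x)
  rw [map_neg] at this
  linarith

lemma midpoint (hL : Dominated 𝔼 L) (hL' : Dominated 𝔼 L') :
    Dominated 𝔼 ((2⁻¹ : ℝ) • (L + L')) := by
  intro x
  simp only [LinearMap.smul_apply, LinearMap.add_apply, smul_eq_mul]
  linarith [hL x, hL' x]

end Dominated

lemma mulBM_sub_constBM (ξ η : BM Ω) (c : ℝ) :
    mulBM (ξ - constBM Ω c) η = mulBM ξ η - c • η := by
  ext ω
  simp [mulBM, constBM, sub_mul]

namespace Uncorrelated

variable {𝔼 : SLE Ω} {ξ η : BM Ω} {L L' : BM Ω →ₗ[ℝ] ℝ}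

lemma sub_mul_sub_eq_zero (h : Uncorrelated 𝔼 ξ η) (hL : Dominated 𝔼 L)
    (hL' : Dominated 𝔼 L') : (L ξ - L' ξ) * (L η - L' η) = 0 := by
  have hmid := h _ (hL.midpoint hL')
  simp only [LinearMap.smul_apply, LinearMap.add_apply, smul_eq_mul, h L hL, h L' hL'] at hmid
  linear_combination 4 * hmid

lemma map_mulBM_sub_constBM (h : Uncorrelated 𝔼 ξ η) (hL : Dominated 𝔼 L) (c : ℝ) :
    L (mulBM (ξ - constBM Ω c) η) = (L ξ - c) * L η := by
  rw [mulBM_sub_constBM, map_sub, map_smul, h L hL, smul_eq_mul]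
  ring

theorem E_mulBM_sub_constBM_eq_zero (h : Uncorrelated 𝔼 ξ η) {L₀ : BM Ω →ₗ[ℝ] ℝ}
    (hL₀ : Dominated 𝔼 L₀) {c : ℝ} (hc : L₀ ξ = c)
    (hsign : ∀ L : BM Ω →ₗ[ℝ] ℝ, Dominated 𝔼 L → (L ξ - c) * L₀ η ≤ 0) :
    𝔼.E (mulBM (ξ - constBM Ω c) η) = 0 := by
  obtain ⟨L, hL, hLE⟩ := 𝔼.exists_dominated_eq (mulBM (ξ - constBM Ω c) η)
  have hle : 𝔼.E (mulBM (ξ - constBM Ω c) η) ≤ 0 := by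
    have hpair := h.sub_mul_sub_eq_zero hL hL₀
    rw [hc] at hpair
    calc 𝔼.E (mulBM (ξ - constBM Ω c) η) = (L ξ - c) * L η := by
          rw [← hLE, h.map_mulBM_sub_constBM hL]
      _ = (L ξ - c) * L₀ η := by linear_combination hpair
      _ ≤ 0 := hsign L hL
  have hge : 0 ≤ 𝔼.E (mulBM (ξ - constBM Ω c) η) := by
    simpa [h.map_mulBM_sub_constBM hL₀, hc] using hL₀ (mulBM (ξ - constBM Ω c) η)
  exact le_antisymm hle hge

end Uncorrelated

/-- If `ξ` and `η` are uncorrelated w.r.t. `𝔼`, there is a constant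
`λ̂ ∈ [-𝔼.E (-ξ), 𝔼.E ξ]` with `𝔼.E ((ξ - λ̂) η) = 0`. -/
theorem exists_centering_constant (𝔼 : SLE Ω) (ξ η : BM Ω) (h : Uncorrelated 𝔼 ξ η) :
    ∃ lam ∈ Set.Icc (-𝔼.E (-ξ)) (𝔼.E ξ), 𝔼.E (mulBM (ξ - constBM Ω lam) η) = 0 := by
  obtain ⟨Lmax, hLmax, hLmaxξ⟩ := 𝔼.exists_dominated_eq ξ
  obtain ⟨Lmin, hLmin, hLminξ⟩ := 𝔼.exists_dominated_eq (-ξ)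
  rw [map_neg, neg_eq_iff_eq_neg] at hLminξ
  have hbounds : -𝔼.E (-ξ) ≤ 𝔼.E ξ := hLmaxξ ▸ hLmax.neg_E_neg_le ξ
  have at_max : ∀ L₀ : BM Ω →ₗ[ℝ] ℝ, Dominated 𝔼 L₀ → L₀ ξ = 𝔼.E ξ → 0 ≤ L₀ η →
      ∃ lam ∈ Set.Icc (-𝔼.E (-ξ)) (𝔼.E ξ), 𝔼.E (mulBM (ξ - constBM Ω lam) η) = 0 :=
    fun L₀ hL₀ hξ hη => ⟨_, ⟨hbounds, le_rfl⟩, h.E_mulBM_sub_constBM_eq_zero hL₀ hξ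
      fun L hL => mul_nonpos_of_nonpos_of_nonneg (sub_nonpos.mpr (hL ξ)) hη⟩
  by_cases hLmaxη : 0 ≤ Lmax η
  · exact at_max Lmax hLmax hLmaxξ hLmaxη
  by_cases hLminη : Lmin η ≤ 0
  · exact ⟨_, ⟨le_rfl, hbounds⟩, h.E_mulBM_sub_constBM_eq_zero hLmin hLminξ
      fun L hL => mul_nonpos_of_nonneg_of_nonpos (sub_nonneg.mpr (hL.neg_E_neg_le ξ)) hLminη⟩
  have hLminξ_max : Lmin ξ = 𝔼.E ξ := by
    have hpair := h.sub_mul_sub_eq_zero hLmin hLmax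
    rw [hLmaxξ] at hpair
    exact sub_eq_zero.mp ((mul_eq_zero.mp hpair).resolve_right (by linarith))
  exact at_max Lmin hLmin hLminξ_max (by linarith)
end

section
/- Let E be a sublinear expectation on the space X of bounded measurable real-valued functions on (Ω, F). For every ξ ∈ X and every constant λ ∈ [−E(−ξ), E(ξ)], one has E((ξ − λ)²) ≤ E((ξ − E(ξ))²) + (E(ξ) + E(−ξ))². -/
open MeasureTheory Set Filter Topology Classical

variable {Ω : Type*} [MeasurableSpace Ω]

/-! With `μ = E ξ` and `a = μ - λ ≥ 0`, expand `(ξ - λ)² = (ξ - μ)² + 2a(ξ - μ) + a²`.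
Subadditivity splits off the last two terms, and since `a ≥ 0` positive homogeneity and
translation invariance give `E(2a(ξ - μ) + a²) = 2a(E ξ - μ) + a² = a²`.
Finally `0 ≤ a ≤ E ξ + E(-ξ)` because `λ ≥ -E(-ξ)`. -/

namespace SLE

variable (𝔼 : SLE Ω)

lemma E_constBM (c : ℝ) : 𝔼.E (constBM Ω c) = c :=
  𝔼.const_preserve c _

lemma E_add_constBM (η : BM Ω) (c : ℝ) : 𝔼.E (η + constBM Ω c) = 𝔼.E η + c := by
  have hcancel : η + constBM Ω c + constBM Ω (-c) = η :=
    Subtype.ext (funext fun ω => by simp [constBM])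
  have hle := 𝔼.subadd η (constBM Ω c)
  have hge := 𝔼.subadd (η + constBM Ω c) (constBM Ω (-c))
  rw [E_constBM] at hle
  rw [hcancel, E_constBM] at hge
  linarith

lemma E_sub_constBM (η : BM Ω) (c : ℝ) : 𝔼.E (η - constBM Ω c) = 𝔼.E η - c := by
  have hsub : η - constBM Ω c = η + constBM Ω (-c) :=
    Subtype.ext (funext fun ω => by simp [constBM, sub_eq_add_neg])
  rw [hsub, E_add_constBM, sub_eq_add_neg]

lemma E_sq_sub_le (ξ : BM Ω) {lam : ℝ} (hlam : lam ≤ 𝔼.E ξ) :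
    𝔼.E (mulBM (ξ - constBM Ω lam) (ξ - constBM Ω lam)) ≤
      𝔼.E (mulBM (ξ - constBM Ω (𝔼.E ξ)) (ξ - constBM Ω (𝔼.E ξ))) + (𝔼.E ξ - lam) ^ 2 := by
  set μ := 𝔼.E ξ
  set a := μ - lam
  have hexpand : mulBM (ξ - constBM Ω lam) (ξ - constBM Ω lam) =
      mulBM (ξ - constBM Ω μ) (ξ - constBM Ω μ) +
        ((2 * a) • (ξ - constBM Ω μ) + constBM Ω (a ^ 2)) := by
    refine Subtype.ext (funext fun ω => ?_)
    change ((ξ : Ω → ℝ) ω - lam) * ((ξ : Ω → ℝ) ω - lam) =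
      ((ξ : Ω → ℝ) ω - μ) * ((ξ : Ω → ℝ) ω - μ) + (2 * a * ((ξ : Ω → ℝ) ω - μ) + a ^ 2)
    ring
  have hcross : 𝔼.E ((2 * a) • (ξ - constBM Ω μ) + constBM Ω (a ^ 2)) = a ^ 2 := by
    rw [E_add_constBM, 𝔼.pos_homog _ (by linarith), E_sub_constBM, sub_self, mul_zero, zero_add]
  calc 𝔼.E (mulBM (ξ - constBM Ω lam) (ξ - constBM Ω lam))
      ≤ 𝔼.E (mulBM (ξ - constBM Ω μ) (ξ - constBM Ω μ)) +
          𝔼.E ((2 * a) • (ξ - constBM Ω μ) + constBM Ω (a ^ 2)) := by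
        rw [hexpand]; exact 𝔼.subadd _ _
    _ = 𝔼.E (mulBM (ξ - constBM Ω μ) (ξ - constBM Ω μ)) + a ^ 2 := by rw [hcross]

end SLE

/-- For `λ ∈ [-𝔼.E (-ξ), 𝔼.E ξ]`,
`𝔼.E ((ξ - λ)²) ≤ 𝔼.E ((ξ - 𝔼.E ξ)²) + (𝔼.E ξ + 𝔼.E (-ξ))²`. -/
theorem second_moment_bound (𝔼 : SLE Ω) (ξ : BM Ω) (lam : ℝ)
    (hlam : lam ∈ Set.Icc (-𝔼.E (-ξ)) (𝔼.E ξ)) :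
    𝔼.E (mulBM (ξ - constBM Ω lam) (ξ - constBM Ω lam)) ≤
      𝔼.E (mulBM (ξ - constBM Ω (𝔼.E ξ)) (ξ - constBM Ω (𝔼.E ξ))) +
        (𝔼.E ξ + 𝔼.E (-ξ)) ^ 2 := by
  obtain ⟨hlow, hhigh⟩ := hlam
  have hsq : (𝔼.E ξ - lam) ^ 2 ≤ (𝔼.E ξ + 𝔼.E (-ξ)) ^ 2 :=
    pow_le_pow_left₀ (by linarith) (by linarith) 2
  linarith [𝔼.E_sq_sub_le ξ hhigh]
end

section
/- Cauchy criterion for quasi-sure convergence: Let E be a regular sublinear expectation on the space X of bounded measurable real-valued functions on (Ω, F), with upper capacity C(A) := E(1_A). For a sequence {ξ_i}_{i≥1} ⊂ X with partial sums S_n := Σ_{i=1}^{n} ξ_i, the sequence {S_n} converges pointwise, outside a C-polar set, to some finite-valued random variable if and only if for every ε > 0, lim_{n→∞} C( { ω : sup_{i,j > n} |Σ_{m=i}^{j} ξ_m(ω)| > ε } ) = 0. -/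
/-!
Both directions compare the oscillation sets `{ω | sup_{i,j>n} |ξ_i(ω) + ⋯ + ξ_j(ω)| > ε}`,
which decrease in `n`, with the pointwise Cauchy criterion. Off a polar set `N` of convergence
they shrink to `∅`, so regularity sends their capacities to `0` (and `N` costs nothing by
subadditivity). Conversely, the points where the criterion fails for `ε = 1/(k+1)` form a
set of capacity `0` for each `k`, and regularity makes the countable union of polar sets polar.
-/

open MeasureTheory Set Filter Topology Classical

variable {Ω : Type*} [MeasurableSpace Ω]

namespace SLE

variable (𝔼 : SLE Ω)

lemma cap_eq {A : Set Ω} (hA : MeasurableSet A) : 𝔼.cap A = 𝔼.E (indBM A hA) :=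
  dif_pos hA

lemma cap_nonneg (A : Set Ω) : 0 ≤ 𝔼.cap A := by
  unfold cap
  split_ifs with hA
  · rw [← 𝔼.E_zero]
    exact 𝔼.mono _ _ fun ω => indicator_nonneg (fun _ _ => zero_le_one) ω
  · rfl

lemma cap_mono {A B : Set Ω} (hA : MeasurableSet A) (hB : MeasurableSet B) (hAB : A ⊆ B) :
    𝔼.cap A ≤ 𝔼.cap B := by
  rw [𝔼.cap_eq hA, 𝔼.cap_eq hB]
  exact 𝔼.mono _ _ fun ω => indicator_le_indicator_of_subset hAB (fun _ => zero_le_one) ω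

lemma cap_union_le {A B : Set Ω} (hA : MeasurableSet A) (hB : MeasurableSet B) :
    𝔼.cap (A ∪ B) ≤ 𝔼.cap A + 𝔼.cap B := by
  rw [𝔼.cap_eq (hA.union hB), 𝔼.cap_eq hA, 𝔼.cap_eq hB]
  refine (𝔼.mono (indBM A hA + indBM B hB) _ fun ω => ?_).trans (𝔼.subadd _ _)
  by_cases hωA : ω ∈ A <;> by_cases hωB : ω ∈ B <;> simp [indBM, hωA, hωB]

lemma cap_le_cap_diff_add_cap {A N : Set Ω} (hA : MeasurableSet A) (hN : MeasurableSet N) :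
    𝔼.cap A ≤ 𝔼.cap (A \ N) + 𝔼.cap N :=
  (𝔼.cap_mono hA ((hA.diff hN).union hN) (subset_sdiff_union A N)).trans
    (𝔼.cap_union_le (hA.diff hN) hN)

lemma cap_eq_zero_of_le_of_tendsto {A : Set Ω} {a : ℕ → ℝ} (hle : ∀ n, 𝔼.cap A ≤ a n)
    (ha : Tendsto a atTop (𝓝 0)) : 𝔼.cap A = 0 :=
  le_antisymm (ge_of_tendsto' ha hle) (𝔼.cap_nonneg A)

variable {𝔼}

lemma Regular.tendsto_cap_of_antitone (hreg : 𝔼.Regular) {D : ℕ → Set Ω}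
    (hD : ∀ n, MeasurableSet (D n)) (hanti : Antitone D) (hempty : ⋂ n, D n = ∅) :
    Tendsto (fun n => 𝔼.cap (D n)) atTop (𝓝 0) := by
  simp only [𝔼.cap_eq (hD _)]
  refine hreg _ (fun ω m n hmn => ?_) fun ω => ?_
  · exact indicator_le_indicator_of_subset (hanti hmn) (fun _ => zero_le_one) ω
  · obtain ⟨n₀, hn₀⟩ : ∃ n₀, ω ∉ D n₀ := by
      simpa using eq_empty_iff_forall_notMem.1 hempty ω
    refine tendsto_const_nhds.congr' ?_
    filter_upwards [eventually_ge_atTop n₀] with n hn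
    have hωn : ω ∉ D n := fun hω => hn₀ (hanti hn hω)
    simp [indBM, hωn]

lemma Regular.tendsto_cap_of_antitone_of_iInter_subset (hreg : 𝔼.Regular) {D : ℕ → Set Ω}
    (hD : ∀ n, MeasurableSet (D n)) (hanti : Antitone D) {N : Set Ω} (hN : MeasurableSet N)
    (hN₀ : 𝔼.cap N = 0) (hDN : ⋂ n, D n ⊆ N) : Tendsto (fun n => 𝔼.cap (D n)) atTop (𝓝 0) := by
  have hempty : ⋂ n, (D n \ N) = ∅ := eq_empty_iff_forall_notMem.2 fun ω hω =>
    (mem_iInter.1 hω 0).2 (hDN (mem_iInter.2 fun n => (mem_iInter.1 hω n).1))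
  refine squeeze_zero (fun n => 𝔼.cap_nonneg _) (fun n => ?_) <|
    hreg.tendsto_cap_of_antitone (fun n => (hD n).diff hN)
      (fun m n hmn => sdiff_subset_sdiff_left (hanti hmn)) hempty
  exact (𝔼.cap_le_cap_diff_add_cap (hD n) hN).trans_eq (by rw [hN₀, add_zero])

lemma Regular.cap_iUnion_eq_zero (hreg : 𝔼.Regular) {B : ℕ → Set Ω}
    (hB : ∀ k, MeasurableSet (B k)) (hB₀ : ∀ k, 𝔼.cap (B k) = 0) : 𝔼.cap (⋃ k, B k) = 0 := by
  have hacc : ∀ K, MeasurableSet (accumulate B K) := fun K =>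
    MeasurableSet.biUnion (to_countable _) fun k _ => hB k
  have hacc₀ : ∀ K, 𝔼.cap (accumulate B K) = 0 := by
    intro K
    induction K with
    | zero => rw [accumulate_zero_nat, hB₀]
    | succ K ih =>
      refine le_antisymm ?_ (𝔼.cap_nonneg _)
      rw [accumulate_succ]
      linarith [𝔼.cap_union_le (hacc K) (hB (K + 1)), hB₀ (K + 1)]
  have hU := MeasurableSet.iUnion hB
  refine 𝔼.cap_eq_zero_of_le_of_tendsto (fun K => ?_) <|
    hreg.tendsto_cap_of_antitone (fun K => hU.diff (hacc K))
      (fun K L hKL => sdiff_subset_sdiff_right (monotone_accumulate hKL)) ?_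
  · linarith [𝔼.cap_le_cap_diff_add_cap hU (hacc K), hacc₀ K]
  · refine eq_empty_iff_forall_notMem.2 fun ω hω => ?_
    obtain ⟨k, hk⟩ := mem_iUnion.1 (mem_iInter.1 hω 0).1
    exact (mem_iInter.1 hω k).2 (subset_accumulate hk)

end SLE

lemma Finset.sum_Icc_add_one_eq_sub {M : Type*} [AddCommGroup M] (f : ℕ → M) {q p : ℕ}
    (h : q ≤ p) : ∑ m ∈ Finset.Icc (q + 1) p, f m =
      ∑ m ∈ Finset.Icc 1 p, f m - ∑ m ∈ Finset.Icc 1 q, f m := by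
  have hIoc : ∀ a b : ℕ, Finset.Icc (a + 1) b = Finset.Ioc a b := Finset.Icc_add_one_left_eq_Ioc
  rw [eq_sub_iff_add_eq', hIoc q, hIoc 0, hIoc 0, Finset.sum_Ioc_consecutive f q.zero_le h]

lemma cauchySeq_partialSums_iff {E : Type*} [SeminormedAddCommGroup E] (f : ℕ → E) :
    CauchySeq (fun n => ∑ i ∈ Finset.Icc 1 n, f i) ↔
      ∀ ε > 0, ∃ n, ∀ i > n, ∀ j > n, ‖∑ m ∈ Finset.Icc i j, f m‖ ≤ ε := by
  rw [Metric.cauchySeq_iff]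
  constructor
  · intro h ε hε
    obtain ⟨N, hN⟩ := h ε hε
    refine ⟨N, fun i hi j hj => ?_⟩
    obtain ⟨q, rfl⟩ : ∃ q, i = q + 1 := ⟨i - 1, by omega⟩
    rcases le_or_gt q j with hqj | hjq
    · rw [Finset.sum_Icc_add_one_eq_sub f hqj, ← dist_eq_norm]
      exact (hN j hj.le q (by omega)).le
    · rw [Finset.Icc_eq_empty (by omega), Finset.sum_empty, norm_zero]
      exact hε.le
  · intro h ε hε
    obtain ⟨n, hn⟩ := h (ε / 2) (half_pos hε)
    refine ⟨n + 1, fun p hp q hq => ?_⟩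
    wlog hqp : q ≤ p generalizing p q with H
    · rw [dist_comm]
      exact H q hq p hp (le_of_not_ge hqp)
    rw [dist_eq_norm, ← Finset.sum_Icc_add_one_eq_sub f hqp]
    exact (hn (q + 1) (by omega) p (by omega)).trans_lt (half_lt_self hε)

def blockSumExceedSet (ξ : ℕ → BM Ω) (ε : ℝ) (n : ℕ) : Set Ω :=
  {ω | ∃ i j, n < i ∧ n < j ∧ ε < |∑ m ∈ Finset.Icc i j, (ξ m : Ω → ℝ) ω|}

section blockSumExceedSet

variable (ξ : ℕ → BM Ω)

lemma measurableSet_blockSumExceedSet (ε : ℝ) (n : ℕ) :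
    MeasurableSet (blockSumExceedSet ξ ε n) := by
  have : blockSumExceedSet ξ ε n = ⋃ (i) (_ : n < i) (j) (_ : n < j),
      {ω | ε < |∑ m ∈ Finset.Icc i j, (ξ m : Ω → ℝ) ω|} := by
    ext ω
    simp [blockSumExceedSet]
  rw [this]
  refine .iUnion fun i => .iUnion fun _ => .iUnion fun j => .iUnion fun _ => ?_
  exact measurableSet_lt measurable_const
    (Finset.measurable_sum _ fun m _ => BM.measurable (ξ m)).abs

lemma antitone_blockSumExceedSet (ε : ℝ) : Antitone (blockSumExceedSet ξ ε) :=
  fun _ _ hmn _ ⟨i, j, hi, hj, h⟩ => ⟨i, j, hmn.trans_lt hi, hmn.trans_lt hj, h⟩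

lemma blockSumExceedSet_subset {ε δ : ℝ} (hδε : δ ≤ ε) (n : ℕ) :
    blockSumExceedSet ξ ε n ⊆ blockSumExceedSet ξ δ n :=
  fun _ ⟨i, j, hi, hj, h⟩ => ⟨i, j, hi, hj, hδε.trans_lt h⟩

lemma exists_tendsto_partialSums_iff (ω : Ω) :
    (∃ l, Tendsto (fun n => ∑ i ∈ Finset.Icc 1 n, (ξ i : Ω → ℝ) ω) atTop (𝓝 l)) ↔
      ∀ ε > 0, ∃ n, ω ∉ blockSumExceedSet ξ ε n := by
  rw [← cauchy_map_iff_exists_tendsto, ← CauchySeq, cauchySeq_partialSums_iff]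
  simp [blockSumExceedSet, Real.norm_eq_abs]

end blockSumExceedSet

/-- Cauchy criterion for quasi-sure convergence of the partial sums `S_n`
under a regular sublinear expectation. -/
theorem qs_convergence_cauchy_criterion (𝔼 : SLE Ω) (hreg : 𝔼.Regular) (ξ : ℕ → BM Ω) :
    (∃ N : Set Ω, MeasurableSet N ∧ 𝔼.cap N = 0 ∧ ∀ ω ∉ N,
        ∃ l : ℝ, Tendsto (fun n => ∑ i ∈ Finset.Icc 1 n, (ξ i : Ω → ℝ) ω) atTop (𝓝 l)) ↔
    (∀ ε > 0, Tendsto (fun n : ℕ =>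
        𝔼.cap {ω | ∃ i j, n < i ∧ n < j ∧ ε < |∑ m ∈ Finset.Icc i j, (ξ m : Ω → ℝ) ω|})
      atTop (𝓝 0)) := by
  simp_rw [exists_tendsto_partialSums_iff]
  constructor
  · rintro ⟨N, hN, hN₀, hconv⟩ ε hε
    refine hreg.tendsto_cap_of_antitone_of_iInter_subset (measurableSet_blockSumExceedSet ξ ε)
      (antitone_blockSumExceedSet ξ ε) hN hN₀ fun ω hω => ?_
    by_contra hωN
    obtain ⟨n, hn⟩ := hconv ω hωN ε hε
    exact hn (mem_iInter.1 hω n)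
  · intro hcap
    set B : ℕ → Set Ω := fun k => ⋂ n, blockSumExceedSet ξ (1 / (k + 1)) n
    have hB : ∀ k, MeasurableSet (B k) := fun k =>
      .iInter fun n => measurableSet_blockSumExceedSet ξ _ n
    have hB₀ : ∀ k, 𝔼.cap (B k) = 0 := fun k =>
      𝔼.cap_eq_zero_of_le_of_tendsto
        (fun n => 𝔼.cap_mono (hB k) (measurableSet_blockSumExceedSet ξ _ n) (iInter_subset _ n))
        (hcap _ Nat.one_div_pos_of_nat)
    refine ⟨⋃ k, B k, .iUnion hB, hreg.cap_iUnion_eq_zero hB hB₀, fun ω hω ε hε => ?_⟩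
    obtain ⟨k, hk⟩ := exists_nat_one_div_lt hε
    obtain ⟨n, hn⟩ : ∃ n, ω ∉ blockSumExceedSet ξ (1 / (k + 1)) n := by
      simpa [B] using fun h => hω (mem_iUnion.2 ⟨k, h⟩)
    exact ⟨n, fun h => hn (blockSumExceedSet_subset ξ hk.le n h)⟩
end
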